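/- arXiv:2503.13863 — 2 statements merged into one kernel-verified Lean document; each statement's English description precedes it below -/
import Mathlib

section
/- Let $\Omega \subseteq \mathbb{R}^n$ and define $w_0^{(1)}(x)=1$, $w_0^{(i)}(x)=e^{x_{i-1}}$ for $2\le i\le n+1$, and $w_0^{(n+2)}(x)=e^{-x_1}$. Then the determinant of the $(n+2)\times(n+2)$ matrix $W(x)$ with rows $(w_0^{(i)}, \partial_{x_1}w_0^{(i)},\dots,\partial_{x_n}w_0^{(i)}, \Delta w_0^{(i)})$ equals $2\prod_{j=2}^{n} e^{x_j}$, which is bounded below by a positive constant on any bounded domain $\Omega$. -/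
open MeasureTheory Real Filter

/-- Partial derivative `∂f/∂x_j` of a real-valued function on `ℝⁿ`. -/
noncomputable def pd {n : ℕ} (j : Fin n) (f : EuclideanSpace ℝ (Fin n) → ℝ)
    (x : EuclideanSpace ℝ (Fin n)) : ℝ :=
  fderiv ℝ f x (EuclideanSpace.single j 1)

/-- Euclidean Laplacian `Δf = ∑ⱼ ∂²f/∂x_j²`. -/
noncomputable def lapl {n : ℕ} (f : EuclideanSpace ℝ (Fin n) → ℝ)
    (x : EuclideanSpace ℝ (Fin n)) : ℝ :=
  ∑ j, pd j (fun y => pd j f y) x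

/-- The `(n+2) × (n+2)` matrix whose `i`-th row is
`(w_i(x), ∂₁ w_i(x), …, ∂ₙ w_i(x), Δ w_i(x))`. -/
noncomputable def Wmat {n : ℕ} (w : Fin (n + 2) → EuclideanSpace ℝ (Fin n) → ℝ)
    (x : EuclideanSpace ℝ (Fin n)) : Matrix (Fin (n + 2)) (Fin (n + 2)) ℝ :=
  fun i j =>
    if hj : (j : ℕ) = 0 then w i x
    else if hj' : (j : ℕ) ≤ n then pd ⟨(j : ℕ) - 1, by omega⟩ (w i) x
    else lapl (w i) x

/-!
Each `w_i` has the form `y ↦ exp (s_i * y_{k_i})` (slope `s_i = 0` for the constant), so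
row `i` of `W(x)` is `w_i(x)` times a constant row. Hence `det W(x) = (∏ᵢ w_i(x)) * det P`
for a constant matrix `P`, and `∏ᵢ w_i(x) = ∏_{j ≥ 2} e^{x_j}` because `e^{x_1}` and
`e^{-x_1}` cancel. Adding row `1` to the last row of `P` and then subtracting its last column
from column `0` makes it triangular with diagonal `(1, …, 1, 2)`. The lower bound holds because
the determinant is continuous and positive, hence bounded below on the compact closure of `Ω`.
-/

section

variable {n : ℕ}

theorem pd_comp_apply {g : ℝ → ℝ} {k : Fin n} {x : EuclideanSpace ℝ (Fin n)}
    (hg : DifferentiableAt ℝ g (x k)) (j : Fin n) :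
    pd j (fun y => g (y k)) x = if j = k then deriv g (x k) else 0 := by
  have h := hg.hasDerivAt.comp_hasFDerivAt x (EuclideanSpace.proj (𝕜 := ℝ) k).hasFDerivAt
  rw [pd, show (fun y : EuclideanSpace ℝ (Fin n) => g (y k)) = g ∘ EuclideanSpace.proj k
    from rfl, h.fderiv]
  simp [eq_comm]

theorem lapl_comp_apply {g : ℝ → ℝ} {k : Fin n} {x : EuclideanSpace ℝ (Fin n)}
    (hg : Differentiable ℝ g) (hg' : DifferentiableAt ℝ (deriv g) (x k)) :
    lapl (fun y => g (y k)) x = deriv (deriv g) (x k) := by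
  have hrow : ∀ j, (fun y => pd j (fun z => g (z k)) y) =
      fun y => if j = k then deriv g (y k) else 0 := fun j => by
    funext y
    exact pd_comp_apply (hg _) j
  have hj : ∀ j, pd j (fun y => pd j (fun z => g (z k)) y) x =
      if j = k then deriv (deriv g) (x k) else 0 := fun j => by
    rw [hrow]
    split_ifs with h
    · subst h
      simpa using pd_comp_apply hg' j
    · simp [pd]
  simp [lapl, hj]

end

namespace Wmat

variable {n : ℕ}

def expRow (s : ℝ) (k : Fin n) (j : Fin (n + 2)) : ℝ :=
  if (j : ℕ) = 0 then 1
  else if (j : ℕ) ≤ n then (if (j : ℕ) = k + 1 then s else 0)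
  else s ^ 2

theorem apply_of_eq_exp {w : Fin (n + 2) → EuclideanSpace ℝ (Fin n) → ℝ} {i : Fin (n + 2)}
    {s : ℝ} {k : Fin n} (hw : w i = fun y => exp (s * y k)) (x : EuclideanSpace ℝ (Fin n))
    (j : Fin (n + 2)) : Wmat w x i j = exp (s * x k) * expRow s k j := by
  have hdiff : Differentiable ℝ fun t => exp (s * t) := by fun_prop
  have hderiv : deriv (fun t => exp (s * t)) = fun t => s * exp (s * t) := by
    funext t
    rw [(((hasDerivAt_id' t).const_mul s).exp).deriv]
    ring
  have hderiv2 : deriv (deriv fun t => exp (s * t)) = fun t => s ^ 2 * exp (s * t) := by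
    funext t
    simp only [hderiv, deriv_const_mul_field']
    ring
  unfold Wmat expRow
  split_ifs with _ _ hk
  · simp [hw]
  · rw [hw, pd_comp_apply hdiff.differentiableAt, if_pos (Fin.ext (by simp; omega)), hderiv,
      mul_comm]
  · rw [hw, pd_comp_apply hdiff.differentiableAt,
      if_neg fun h => hk (by rw [← h]; simp; omega), mul_zero]
  · rw [hw, lapl_comp_apply hdiff (by rw [hderiv]; fun_prop), hderiv2, mul_comm]

theorem eq_diagonal_mul {w : Fin (n + 2) → EuclideanSpace ℝ (Fin n) → ℝ}
    {s : Fin (n + 2) → ℝ} {k : Fin (n + 2) → Fin n}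
    (hw : ∀ i, w i = fun y => exp (s i * y (k i))) (x : EuclideanSpace ℝ (Fin n)) :
    Wmat w x = Matrix.diagonal (fun i => w i x) * Matrix.of fun i => expRow (s i) (k i) := by
  ext i j
  rw [Matrix.diagonal_mul, apply_of_eq_exp (hw i), hw i, Matrix.of_apply]

def expSlope (n : ℕ) (i : Fin (n + 2)) : ℝ :=
  if (i : ℕ) = 0 then 0 else if (i : ℕ) ≤ n then 1 else -1

def expCoord (hn : 0 < n) (i : Fin (n + 2)) : Fin n :=
  if h : (i : ℕ) ≤ n then ⟨(i : ℕ) - 1, by omega⟩ else ⟨0, hn⟩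

theorem val_expCoord (hn : 0 < n) (i : Fin (n + 2)) :
    (expCoord hn i : ℕ) = if (i : ℕ) ≤ n then (i : ℕ) - 1 else 0 := by
  unfold expCoord
  split_ifs <;> rfl

theorem expRow_expSlope_expCoord (hn : 0 < n) (i j : Fin (n + 2)) :
    expRow (expSlope n i) (expCoord hn i) j =
      if (j : ℕ) = 0 then 1
      else if (i : ℕ) = 0 then 0
      else if (i : ℕ) ≤ n then (if (j : ℕ) = i ∨ (j : ℕ) = n + 1 then 1 else 0)
      else if (j : ℕ) = 1 then -1 else if (j : ℕ) = n + 1 then 1 else 0 := by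
  have := j.isLt
  simp only [expRow, expSlope, val_expCoord]
  split_ifs <;> first | omega | norm_num

theorem det_expRow_expSlope_expCoord (hn : 0 < n) :
    (Matrix.of fun i => expRow (expSlope n i) (expCoord hn i)).det = 2 := by
  set P := Matrix.of fun i => expRow (expSlope n i) (expCoord hn i)
  set L := Fin.last (n + 1)
  set Q := P.updateRow L (P L + (1 : ℝ) • P ⟨1, by omega⟩)
  set R := Q.transpose.updateRow 0 (Q.transpose 0 + (-1 : ℝ) • Q.transpose L)
  have hL : (L : ℕ) = n + 1 := rfl
  have hoL : L ≠ ⟨1, by omega⟩ := Fin.ne_of_val_ne (by simp only [hL]; omega)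
  have h0L : (0 : Fin (n + 2)) ≠ L := Fin.ne_of_val_ne (by simp [hL])
  have hPR : P.det = R.det := by
    rw [Matrix.det_updateRow_add_smul_self _ h0L, Matrix.det_transpose,
      Matrix.det_updateRow_add_smul_self _ hoL]
  have hR : ∀ i j, R i j = if i = j then (if (i : ℕ) = n + 1 then 2 else 1)
      else if (i : ℕ) = n + 1 ∧ (j : ℕ) ≠ 0 then 1 else 0 := by
    intro i j
    simp only [R, Q, P, L, Matrix.updateRow_apply, Matrix.transpose_apply, Matrix.of_apply,
      expRow_expSlope_expCoord, Pi.add_apply, Pi.smul_apply, smul_eq_mul, Fin.ext_iff,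
      Fin.val_last, Fin.val_zero, ↓reduceIte]
    have := i.isLt
    have := j.isLt
    split_ifs <;> (try simp_all) <;> first | omega | norm_num
  rw [hPR, Matrix.det_of_isLowerTriangular]
  · have hdiag : ∀ i ≠ L, R i i = 1 := fun i hi => by
      rw [hR, if_pos rfl, if_neg fun h => hi (Fin.ext (h.trans hL.symm))]
    rw [Finset.prod_eq_single L (fun i _ hi => hdiag i hi) (by simp), hR]
    simp [hL]
  · intro i j hij
    have hij : (i : ℕ) < j := hij
    rw [hR, if_neg (Fin.ne_of_val_ne hij.ne), if_neg (by omega)]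

theorem prod_exp_expSlope_expCoord (hn : 0 < n) (x : Fin n → ℝ) :
    ∏ i, exp (expSlope n i * x (expCoord hn i)) =
      ∏ j : Fin n, if (j : ℕ) = 0 then 1 else exp (x j) := by
  have hslope₀ : expSlope n 0 = 0 := by simp [expSlope]
  have hslope : ∀ k : Fin n, expSlope n k.castSucc.succ = 1 := fun k => by
    simp [expSlope, Nat.succ_le_of_lt k.isLt]
  have hslope_last : expSlope n (Fin.last (n + 1)) = -1 := by simp [expSlope]
  have hcoord : ∀ k : Fin n, expCoord hn k.castSucc.succ = k := fun k =>
    Fin.ext (by simp [val_expCoord])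
  have hcoord_last : expCoord hn (Fin.last (n + 1)) = ⟨0, hn⟩ :=
    Fin.ext (by simp [val_expCoord])
  rw [Fin.prod_univ_succ, Fin.prod_univ_castSucc, Fin.succ_last, hslope₀, hslope_last,
    hcoord_last]
  simp only [hslope, hcoord, zero_mul, exp_zero, one_mul, neg_one_mul]
  rw [← Finset.mul_prod_erase _ _ (Finset.mem_univ ⟨0, hn⟩),
    ← Finset.mul_prod_erase _ _ (Finset.mem_univ ⟨0, hn⟩), if_pos rfl, one_mul,
    mul_right_comm, ← exp_add, add_neg_cancel, exp_zero, one_mul]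
  exact Finset.prod_congr rfl fun j hj =>
    (if_neg fun h => Finset.ne_of_mem_erase hj (Fin.ext h)).symm

theorem det_of_eq_exp {hn : 0 < n} {w : Fin (n + 2) → EuclideanSpace ℝ (Fin n) → ℝ}
    (hw : ∀ i, w i = fun y => exp (expSlope n i * y (expCoord hn i)))
    (x : EuclideanSpace ℝ (Fin n)) :
    (Wmat w x).det = 2 * ∏ j : Fin n, if (j : ℕ) = 0 then 1 else exp (x j) := by
  rw [eq_diagonal_mul hw, Matrix.det_mul, Matrix.det_diagonal, det_expRow_expSlope_expCoord,
    mul_comm]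
  simp only [hw, prod_exp_expSlope_expCoord]

end Wmat

theorem Bornology.IsBounded.exists_pos_le {E : Type*} [PseudoMetricSpace E] [ProperSpace E]
    {f : E → ℝ} (hf : Continuous f) (hpos : ∀ x, 0 < f x) {s : Set E}
    (hs : Bornology.IsBounded s) : ∃ r > 0, ∀ x ∈ s, r ≤ f x := by
  rcases (closure s).eq_empty_or_nonempty with hempty | hne
  · exact ⟨1, one_pos, fun x hx => absurd (subset_closure hx) (hempty ▸ Set.notMem_empty x)⟩
  · obtain ⟨x₀, -, hmin⟩ := hs.isCompact_closure.exists_isMinOn hne hf.continuousOn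
    exact ⟨f x₀, hpos x₀, fun x hx => hmin (subset_closure hx)⟩

theorem stmt_1 (n : ℕ) (hn : 1 ≤ n) (Ω : Set (EuclideanSpace ℝ (Fin n)))
    (w : Fin (n + 2) → EuclideanSpace ℝ (Fin n) → ℝ)
    (hw1 : ∀ x, w 0 x = 1)
    (hwi : ∀ i : Fin (n + 2), ∀ _h1 : 1 ≤ (i : ℕ), ∀ _h2 : (i : ℕ) ≤ n, ∀ x,
      w i x = Real.exp (x ⟨(i : ℕ) - 1, by omega⟩))
    (hwl : ∀ x, w (Fin.last (n + 1)) x = Real.exp (-(x ⟨0, hn⟩))) :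
    (∀ x ∈ Ω, (Wmat w x).det
        = 2 * ∏ j : Fin n, if (j : ℕ) = 0 then 1 else Real.exp (x j)) ∧
    (Bornology.IsBounded Ω → ∃ r > 0, ∀ x ∈ Ω, r ≤ |(Wmat w x).det|) := by
  have hw : ∀ i, w i = fun y => exp (Wmat.expSlope n i * y (Wmat.expCoord hn i)) := by
    intro i
    funext y
    by_cases h0 : (i : ℕ) = 0
    · rw [show i = 0 from Fin.ext h0, hw1]
      simp [Wmat.expSlope]
    by_cases hle : (i : ℕ) ≤ n
    · rw [hwi i (by omega) hle]
      simp [Wmat.expSlope, Wmat.expCoord, h0, hle]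
    · obtain rfl : i = Fin.last (n + 1) := Fin.ext (by simp; omega)
      simp [Wmat.expSlope, Wmat.expCoord, hwl]
  have hdet := Wmat.det_of_eq_exp hw
  refine ⟨fun x _ => hdet x, fun hΩ => ?_⟩
  have hcont : Continuous fun x : EuclideanSpace ℝ (Fin n) =>
      2 * ∏ j : Fin n, if (j : ℕ) = 0 then 1 else exp (x j) :=
    continuous_const.mul (continuous_finsetProd _ fun j _ => by split_ifs <;> fun_prop)
  obtain ⟨r, hr, hle⟩ := hΩ.exists_pos_le hcont fun x => by positivity
  exact ⟨r, hr, fun x hx => by rw [hdet x, abs_of_pos (by positivity)]; exact hle x hx⟩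
end

section
/- Under the hypotheses of the previous statement, if furthermore there exist constants $r_2,\dots,r_{n+1}>0$ with $|\partial_{x_{i-1}} w_0^{(i)}(x)| \ge r_{i-1}$ for $3\le i\le n+1$ and $|\partial_{x_1}w_0^{(2)}\partial^2_{x_1x_1}w_0^{(n+2)} - \partial^2_{x_1x_1}w_0^{(2)}\partial_{x_1}w_0^{(n+2)}| \ge r_{n+1} > 0$ on $\Omega$, then there exists $r_0>0$ such that $|\det W(x)| \ge r_0$ for all $x\in\Omega$. -/
/-!
Index rows, columns and coordinates from `0`, as in `Wmat`. Row `0` of `W` is `(1, 0, …, 0)`;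
rows `1` and `n + 1` depend only on `x₀`, so they vanish in the columns `2, …, n` and their
Laplacian is `∂₀²`; and on the columns `2, …, n` the rows `2, …, n` form a lower triangular block
with diagonal `∂_{i-1} w_i`. Splitting off that block and expanding the remaining `3 × 3` block
along row `0` gives `det W = w₀ · ∏ᵢ ∂_{i-1} w_i · (∂₀w₁ ∂₀²w_{n+1} − ∂₀²w₁ ∂₀w_{n+1})`, and every
factor is bounded away from `0` on `Ω`.
-/

open MeasureTheory Real Filter

theorem fderiv_apply_eq_zero_of_forall_add_smul_eq {𝕜 E F : Type*} [NontriviallyNormedField 𝕜]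
    [NormedAddCommGroup E] [NormedSpace 𝕜 E] [NormedAddCommGroup F] [NormedSpace 𝕜 F]
    {f : E → F} {x v : E} (h : ∀ t : 𝕜, f (x + t • v) = f x) : fderiv 𝕜 f x v = 0 := by
  by_cases hf : DifferentiableAt 𝕜 f x
  · rw [← hf.lineDeriv_eq_fderiv, lineDeriv, funext h, deriv_const]
  · rw [fderiv_zero_of_not_differentiableAt hf, zero_apply]

section

variable {n : ℕ} {f : EuclideanSpace ℝ (Fin n) → ℝ}

def DependsOnFirstCoords (m : ℕ) (f : EuclideanSpace ℝ (Fin n) → ℝ) : Prop :=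
  ∀ x y : EuclideanSpace ℝ (Fin n), (∀ k : Fin n, (k : ℕ) < m → x k = y k) → f x = f y

theorem DependsOnFirstCoords.mono {m m' : ℕ} (hf : DependsOnFirstCoords m f) (h : m ≤ m') :
    DependsOnFirstCoords m' f :=
  fun x y hxy => hf x y fun k hk => hxy k (hk.trans_le h)

theorem DependsOnFirstCoords.pd_eq_zero {m : ℕ} (hf : DependsOnFirstCoords m f) {j : Fin n}
    (hj : m ≤ j) (x : EuclideanSpace ℝ (Fin n)) : pd j f x = 0 := by
  refine fderiv_apply_eq_zero_of_forall_add_smul_eq fun t => hf _ _ fun k hk => ?_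
  simp [Fin.ne_of_val_ne (by omega : (k : ℕ) ≠ j)]

theorem pd_const (j : Fin n) (c : ℝ) (x : EuclideanSpace ℝ (Fin n)) :
    pd j (fun _ => c) x = 0 := by
  rw [pd, fderiv_const_apply, zero_apply]

theorem DependsOnFirstCoords.lapl_eq (hf : DependsOnFirstCoords 1 f) (hn : 1 ≤ n)
    (x : EuclideanSpace ℝ (Fin n)) : lapl f x = pd ⟨0, hn⟩ (fun y => pd ⟨0, hn⟩ f y) x := by
  refine Fintype.sum_eq_single _ fun j hj => ?_
  rw [funext (hf.pd_eq_zero (Nat.one_le_iff_ne_zero.2 fun h => hj (Fin.ext h))), pd_const]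

theorem DependsOnFirstCoords.lapl_eq_zero (hf : DependsOnFirstCoords 0 f)
    (x : EuclideanSpace ℝ (Fin n)) : lapl f x = 0 :=
  Finset.sum_eq_zero fun j _ => by rw [funext (hf.pd_eq_zero (Nat.zero_le j)), pd_const]

end

namespace Matrix

variable {m R : Type*} [Fintype m] [DecidableEq m] [CommRing R]

theorem det_eq_prod_diag_mul_det_toSquareBlockProp_compl [LinearOrder m] (M : Matrix m m R)
    (p : m → Prop) [DecidablePred p] (hblock : ∀ i, ¬p i → ∀ j, p j → M i j = 0)
    (htri : ∀ i j, p i → p j → i < j → M i j = 0) :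
    M.det = (∏ i : {i // p i}, M i i) * (M.toSquareBlockProp fun i => ¬p i).det := by
  rw [twoBlockTriangular_det M p hblock, det_of_isLowerTriangular]
  · rfl
  · intro i j hij
    exact htri i j i.2 j.2 hij

theorem det_eq_of_forall_eq_or_eq_or_eq (M : Matrix m m R) {o a b : m} (hoa : o ≠ a) (hob : o ≠ b)
    (hab : a ≠ b) (hmem : ∀ i, i = o ∨ i = a ∨ i = b) (ha : M o a = 0) (hb : M o b = 0) :
    M.det = M o o * (M a a * M b b - M a b * M b a) := by
  have hbij : Function.Bijective ![o, a, b] := by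
    refine ⟨fun i j hij => ?_, fun i => ?_⟩
    · fin_cases i <;> fin_cases j <;> simp_all [eq_comm]
    · rcases hmem i with rfl | rfl | rfl
      exacts [⟨0, rfl⟩, ⟨1, rfl⟩, ⟨2, rfl⟩]
  rw [← det_submatrix_equiv_self (Equiv.ofBijective _ hbij), det_fin_three]
  simp only [submatrix_apply, Equiv.coe_ofBijective, cons_val_zero, cons_val_one, cons_val, ha, hb]
  ring

end Matrix

theorem Fin.eq_zero_or_eq_one_or_eq_last_of_not {n : ℕ} {i : Fin (n + 2)}
    (hi : ¬(2 ≤ (i : ℕ) ∧ (i : ℕ) ≤ n)) : i = 0 ∨ i = 1 ∨ i = Fin.last (n + 1) := by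
  simp only [Fin.ext_iff, Fin.val_zero, Fin.val_one, Fin.val_last]
  omega

section Wmat

variable {n : ℕ} {w : Fin (n + 2) → EuclideanSpace ℝ (Fin n) → ℝ} {x : EuclideanSpace ℝ (Fin n)}

theorem Wmat_apply_zero (i : Fin (n + 2)) : Wmat w x i 0 = w i x := by
  simp [Wmat]

theorem Wmat_apply_of_ne_zero_of_le (i j : Fin (n + 2)) (h0 : (j : ℕ) ≠ 0) (hjn : (j : ℕ) ≤ n) :
    Wmat w x i j = pd ⟨(j : ℕ) - 1, by omega⟩ (w i) x := by
  simp [Wmat, h0, hjn]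

theorem Wmat_apply_last (i : Fin (n + 2)) : Wmat w x i (Fin.last (n + 1)) = lapl (w i) x := by
  simp [Wmat]

theorem Wmat_apply_eq_zero_of_dependsOnFirstCoords {i : Fin (n + 2)} {d : ℕ}
    (hw : DependsOnFirstCoords d (w i)) {j : Fin (n + 2)} (hdj : d < j) (hjn : (j : ℕ) ≤ n) :
    Wmat w x i j = 0 := by
  rw [Wmat_apply_of_ne_zero_of_le i j (by omega) hjn]
  exact hw.pd_eq_zero (by simp; omega) x

theorem det_Wmat_eq (hn : 1 ≤ n) (h0 : DependsOnFirstCoords 0 (w 0))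
    (hmid : ∀ i : Fin (n + 2), 1 ≤ (i : ℕ) → (i : ℕ) ≤ n → DependsOnFirstCoords i (w i))
    (hlast : DependsOnFirstCoords 1 (w (Fin.last (n + 1)))) :
    (Wmat w x).det = (∏ i : {i : Fin (n + 2) // 2 ≤ (i : ℕ) ∧ (i : ℕ) ≤ n},
        pd ⟨(i : ℕ) - 1, by have := i.2; omega⟩ (w i) x) *
      (w 0 x * (pd ⟨0, hn⟩ (w 1) x * pd ⟨0, hn⟩ (fun y => pd ⟨0, hn⟩ (w (Fin.last (n + 1))) y) x
        - pd ⟨0, hn⟩ (fun y => pd ⟨0, hn⟩ (w 1) y) x * pd ⟨0, hn⟩ (w (Fin.last (n + 1))) x)) := by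
  set p : Fin (n + 2) → Prop := fun i => 2 ≤ (i : ℕ) ∧ (i : ℕ) ≤ n
  have h1 : DependsOnFirstCoords 1 (w 1) := by simpa using hmid 1 (by simp) (by simp; omega)
  have hfirst (i : Fin (n + 2)) (hi : ¬p i) : DependsOnFirstCoords 1 (w i) := by
    obtain rfl | rfl | rfl := Fin.eq_zero_or_eq_one_or_eq_last_of_not hi
    exacts [h0.mono zero_le_one, h1, hlast]
  have hcol1 (i : Fin (n + 2)) : Wmat w x i 1 = pd ⟨0, hn⟩ (w i) x :=
    Wmat_apply_of_ne_zero_of_le i 1 (by simp) (by simp; omega)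
  rw [Matrix.det_eq_prod_diag_mul_det_toSquareBlockProp_compl _ p
    (fun i hi j hj => Wmat_apply_eq_zero_of_dependsOnFirstCoords (hfirst i hi) (by omega) hj.2)
    (fun i j hi hj hij => Wmat_apply_eq_zero_of_dependsOnFirstCoords (hmid i (by omega) hi.2) hij
      hj.2)]
  rw [Matrix.det_eq_of_forall_eq_or_eq_or_eq _ (o := ⟨0, by simp [p]⟩) (a := ⟨1, by simp [p]⟩)
    (b := ⟨Fin.last (n + 1), by simp [p]⟩) (by simp [Subtype.ext_iff])
    (by simp [Subtype.ext_iff]) (by simp [Subtype.ext_iff, Fin.ext_iff]; omega)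
    (fun i => by simpa [Subtype.ext_iff] using Fin.eq_zero_or_eq_one_or_eq_last_of_not i.2)
    ((hcol1 0).trans (h0.pd_eq_zero le_rfl x)) ((Wmat_apply_last 0).trans (h0.lapl_eq_zero x))]
  congr 1
  · exact Finset.prod_congr rfl fun i _ => Wmat_apply_of_ne_zero_of_le _ _ (by omega) i.2.2
  · change Wmat w x 0 0 * (Wmat w x 1 1 * Wmat w x (Fin.last (n + 1)) (Fin.last (n + 1)) -
      Wmat w x 1 (Fin.last (n + 1)) * Wmat w x (Fin.last (n + 1)) 1) = _
    rw [Wmat_apply_zero, hcol1, hcol1, Wmat_apply_last, Wmat_apply_last, h1.lapl_eq hn,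
      hlast.lapl_eq hn]

end Wmat

theorem stmt_3 (n : ℕ) (hn : 1 ≤ n) (Ω : Set (EuclideanSpace ℝ (Fin n)))
    (w : Fin (n + 2) → EuclideanSpace ℝ (Fin n) → ℝ)
    (hw1 : ∀ x, w 0 x = 1)
    (hdep : ∀ i : Fin (n + 2), 1 ≤ (i : ℕ) → (i : ℕ) ≤ n → ∀ x y,
      (∀ j : Fin n, (j : ℕ) < (i : ℕ) → x j = y j) → w i x = w i y)
    (hlast : ∀ x y : EuclideanSpace ℝ (Fin n),
      x ⟨0, hn⟩ = y ⟨0, hn⟩ → w (Fin.last (n + 1)) x = w (Fin.last (n + 1)) y)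
    (r : ℕ → ℝ)
    (hr : ∀ i : Fin (n + 2), ∀ h2 : 2 ≤ (i : ℕ), ∀ h3 : (i : ℕ) ≤ n,
      0 < r (i : ℕ) ∧ ∀ x ∈ Ω, r (i : ℕ) ≤ |pd ⟨(i : ℕ) - 1, by omega⟩ (w i) x|)
    (rb : ℝ) (hrb : 0 < rb)
    (hbr : ∀ x ∈ Ω, rb ≤
      |pd ⟨0, hn⟩ (w 1) x * pd ⟨0, hn⟩ (fun y => pd ⟨0, hn⟩ (w (Fin.last (n + 1))) y) x
        - pd ⟨0, hn⟩ (fun y => pd ⟨0, hn⟩ (w 1) y) x * pd ⟨0, hn⟩ (w (Fin.last (n + 1))) x|) :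
    ∃ r0 > 0, ∀ x ∈ Ω, r0 ≤ |(Wmat w x).det| := by
  have hr' (i : {i : Fin (n + 2) // 2 ≤ (i : ℕ) ∧ (i : ℕ) ≤ n}) := hr i i.2.1 i.2.2
  refine ⟨(∏ i : {i : Fin (n + 2) // 2 ≤ (i : ℕ) ∧ (i : ℕ) ≤ n}, r i) * rb,
    mul_pos (Finset.prod_pos fun i _ => (hr' i).1) hrb, fun x hx => ?_⟩
  rw [det_Wmat_eq hn (fun x y _ => (hw1 x).trans (hw1 y).symm) hdep
    (fun x y h => hlast x y (h _ Nat.one_pos)), hw1, one_mul, abs_mul, Finset.abs_prod]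
  exact mul_le_mul (Finset.prod_le_prod (fun i _ => (hr' i).1.le) fun i _ => (hr' i).2 x hx)
    (hbr x hx) hrb.le (by positivity)
end
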